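/- Let m ≥ 2, n ≥ 1, and for each α = 1, …, n let A^α be an m×m real symmetric matrix with trace zero, and let v^α ∈ ℝ^m. Then (Σ_α ‖v^α‖²)·(Σ_α ‖A^α‖_F²) ≥ (m/(m-1))·Σ_{i=1}^m (Σ_α (A^α v^α)_i)², where ‖·‖_F is the Frobenius norm. -/

import Mathlib

/-!
If a symmetric operator has trace zero, each eigenvalue satisfies `λᵢ = -∑_{j ≠ i} λⱼ`, so by
Cauchy–Schwarz `m λᵢ² ≤ (m - 1) ∑ⱼ λⱼ²`. Expanding `v` in an orthonormal eigenbasis turns this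
into `m ‖A v‖² ≤ (m - 1) ‖A‖_F² ‖v‖²`, since `‖A‖_F² = ∑ⱼ λⱼ²`. For several pairs `(Aᵅ, vᵅ)`,
the triangle inequality for `∑_α Aᵅ vᵅ` followed by Cauchy–Schwarz over `α` gives the claim.
-/

open Finset
open scoped RealInnerProductSpace
open WithLp

theorem card_mul_sq_le_of_sum_eq_zero {ι : Type*} [Fintype ι] {f : ι → ℝ}
    (hf : ∑ j, f j = 0) (i : ι) :
    (Fintype.card ι : ℝ) * f i ^ 2 ≤ ((Fintype.card ι : ℝ) - 1) * ∑ j, f j ^ 2 := by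
  classical
  have hsplit (g : ι → ℝ) : ∑ j, g j = g i + ∑ j ∈ univ.erase i, g j :=
    (add_sum_erase _ _ (mem_univ i)).symm
  have hcard : (#(univ.erase i) : ℝ) = Fintype.card ι - 1 := by
    rw [card_erase_of_mem (mem_univ i), card_univ,
      Nat.cast_sub (Fintype.card_pos_iff.mpr ⟨i⟩)]
    simp
  have hfi : f i = -∑ j ∈ univ.erase i, f j := by linarith [hsplit f]
  have hcs := sq_sum_le_card_mul_sum_sq (s := univ.erase i) (f := f)
  rw [hcard, ← neg_sq, ← hfi] at hcs
  rw [hsplit (f · ^ 2)]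
  linarith

theorem norm_sum_sq_le_mul_sum_mul_sum {ι F : Type*} [SeminormedAddCommGroup F]
    (s : Finset ι) (f : ι → F) {c : ℝ} {a b : ι → ℝ} (hc : 0 ≤ c) (ha : ∀ i, 0 ≤ a i)
    (hb : ∀ i, 0 ≤ b i) (h : ∀ i ∈ s, ‖f i‖ ^ 2 ≤ c * a i * b i) :
    ‖∑ i ∈ s, f i‖ ^ 2 ≤ c * (∑ i ∈ s, a i) * ∑ i ∈ s, b i := by
  have hf : ∀ i ∈ s, ‖f i‖ ≤ √c * (√(a i) * √(b i)) := fun i hi => by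
    rw [← Real.sqrt_mul (ha i), ← Real.sqrt_mul hc, ← mul_assoc]
    exact Real.le_sqrt_of_sq_le (h i hi)
  have hnorm : ‖∑ i ∈ s, f i‖ ≤ √c * (√(∑ i ∈ s, a i) * √(∑ i ∈ s, b i)) :=
    calc ‖∑ i ∈ s, f i‖ ≤ ∑ i ∈ s, ‖f i‖ := norm_sum_le _ _
      _ ≤ ∑ i ∈ s, √c * (√(a i) * √(b i)) := sum_le_sum hf
      _ = √c * ∑ i ∈ s, √(a i) * √(b i) := (mul_sum ..).symm
      _ ≤ √c * (√(∑ i ∈ s, a i) * √(∑ i ∈ s, b i)) := by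
        gcongr; exact Real.sum_sqrt_mul_sqrt_le s ha hb
  calc ‖∑ i ∈ s, f i‖ ^ 2 ≤ (√c * (√(∑ i ∈ s, a i) * √(∑ i ∈ s, b i))) ^ 2 := by gcongr
    _ = c * (∑ i ∈ s, a i) * ∑ i ∈ s, b i := by
      rw [mul_pow, mul_pow, Real.sq_sqrt hc, Real.sq_sqrt (sum_nonneg fun i _ => ha i),
        Real.sq_sqrt (sum_nonneg fun i _ => hb i), mul_assoc]

namespace LinearMap.IsSymmetric

variable {E : Type*} [NormedAddCommGroup E] [InnerProductSpace ℝ E] [FiniteDimensional ℝ E]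
  {T : E →ₗ[ℝ] E} {n : ℕ}

theorem norm_apply_sq_eq_sum_eigenvalues_sq_mul (hT : T.IsSymmetric)
    (hn : Module.finrank ℝ E = n) (x : E) :
    ‖T x‖ ^ 2 = ∑ i, hT.eigenvalues hn i ^ 2 * ⟪hT.eigenvectorBasis hn i, x⟫ ^ 2 := by
  rw [← (hT.eigenvectorBasis hn).sum_sq_inner_right (T x)]
  refine sum_congr rfl fun i _ => ?_
  rw [← hT, apply_eigenvectorBasis, real_inner_smul_left, mul_pow]
  rfl

theorem sum_norm_apply_sq_eq_sum_eigenvalues_sq (hT : T.IsSymmetric)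
    (hn : Module.finrank ℝ E = n) {ι : Type*} [Fintype ι] (e : OrthonormalBasis ι ℝ E) :
    ∑ j, ‖T (e j)‖ ^ 2 = ∑ i, hT.eigenvalues hn i ^ 2 := by
  simp_rw [hT.norm_apply_sq_eq_sum_eigenvalues_sq_mul hn]
  rw [sum_comm]
  refine sum_congr rfl fun i _ => ?_
  rw [← mul_sum, e.sum_sq_inner_left, (hT.eigenvectorBasis hn).orthonormal.1 i, one_pow, mul_one]

theorem finrank_mul_norm_apply_sq_le (hT : T.IsSymmetric) (htr : T.trace ℝ E = 0)
    {ι : Type*} [Fintype ι] (e : OrthonormalBasis ι ℝ E) (x : E) :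
    (Module.finrank ℝ E : ℝ) * ‖T x‖ ^ 2 ≤
      ((Module.finrank ℝ E : ℝ) - 1) * (∑ j, ‖T (e j)‖ ^ 2) * ‖x‖ ^ 2 := by
  have hsum : ∑ i, hT.eigenvalues rfl i = 0 := by
    simpa [hT.trace_eq_sum_eigenvalues rfl] using htr
  rw [hT.sum_norm_apply_sq_eq_sum_eigenvalues_sq rfl,
    hT.norm_apply_sq_eq_sum_eigenvalues_sq_mul rfl,
    ← (hT.eigenvectorBasis rfl).sum_sq_inner_right x, mul_sum, mul_sum]
  refine sum_le_sum fun i _ => ?_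
  rw [← mul_assoc]
  exact mul_le_mul_of_nonneg_right (by simpa using card_mul_sq_le_of_sum_eq_zero hsum i)
    (sq_nonneg _)

end LinearMap.IsSymmetric

namespace Matrix

variable {ι : Type*} [Fintype ι]

theorem sum_norm_toEuclideanLin_basisFun_sq {κ : Type*} [Fintype κ] [DecidableEq ι]
    (A : Matrix κ ι ℝ) :
    ∑ j, ‖A.toEuclideanLin (EuclideanSpace.basisFun ι ℝ j)‖ ^ 2 = ∑ i, ∑ j, A i j ^ 2 := by
  simp_rw [EuclideanSpace.real_norm_sq_eq]
  rw [sum_comm]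
  simp [toLpLin_apply]

theorem IsSymm.card_mul_norm_mulVec_sq_le {A : Matrix ι ι ℝ} (hA : A.IsSymm)
    (htr : A.trace = 0) (v : ι → ℝ) :
    (Fintype.card ι : ℝ) * ‖toLp 2 (A.mulVec v)‖ ^ 2 ≤
      ((Fintype.card ι : ℝ) - 1) * (∑ i, ∑ j, A i j ^ 2) * ‖toLp 2 v‖ ^ 2 := by
  classical
  have hT : A.toEuclideanLin.IsSymmetric :=
    isSymmetric_toEuclideanLin_iff.mpr (isHermitian_iff_isSymm.mpr hA)
  have htrT : A.toEuclideanLin.trace ℝ _ = 0 := by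
    rw [toEuclideanLin, toLpLin_eq_toLin, trace_toLin_eq, htr]
  have := hT.finrank_mul_norm_apply_sq_le htrT (EuclideanSpace.basisFun ι ℝ) (toLp 2 v)
  rwa [finrank_euclideanSpace, sum_norm_toEuclideanLin_basisFun_sq, toLpLin_toLp,
    toLin'_apply] at this

end Matrix

theorem refined_kato_algebra_general (m n : ℕ) (hm : 2 ≤ m)
    (A : Fin n → Matrix (Fin m) (Fin m) ℝ)
    (hsym : ∀ α, (A α).IsSymm) (htr : ∀ α, (A α).trace = 0)
    (v : Fin n → Fin m → ℝ) :
    ((m : ℝ) / ((m : ℝ) - 1)) * ∑ i, (∑ α, (A α).mulVec (v α) i) ^ 2 ≤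
      (∑ α, ∑ i, (v α i) ^ 2) * (∑ α, ∑ i, ∑ j, (A α i j) ^ 2) := by
  have hm1 : (0 : ℝ) < m - 1 := by
    have : (2 : ℝ) ≤ m := by exact_mod_cast hm
    linarith
  have hkato (α : Fin n) : ‖toLp 2 ((A α).mulVec (v α))‖ ^ 2 ≤
      ((m - 1) / m) * ‖toLp 2 (v α)‖ ^ 2 * ∑ i, ∑ j, A α i j ^ 2 := by
    have := (hsym α).card_mul_norm_mulVec_sq_le (htr α) (v α)
    rw [Fintype.card_fin] at this
    rw [div_mul_eq_mul_div, div_mul_eq_mul_div, le_div_iff₀ (by positivity)]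
    linear_combination this
  have hsum := norm_sum_sq_le_mul_sum_mul_sum univ _ (by positivity) (fun _ => by positivity)
    (fun _ => by positivity) fun α _ => hkato α
  simp only [EuclideanSpace.real_norm_sq_eq, WithLp.ofLp_sum, Finset.sum_apply] at hsum
  calc (m / (m - 1)) * ∑ i, (∑ α, (A α).mulVec (v α) i) ^ 2
      ≤ (m / (m - 1)) * ((m - 1) / m * (∑ α, ∑ i, v α i ^ 2) * ∑ α, ∑ i, ∑ j, A α i j ^ 2) := by
        gcongr
    _ = (∑ α, ∑ i, v α i ^ 2) * ∑ α, ∑ i, ∑ j, A α i j ^ 2 := by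
        field_simp

theorem refined_kato_algebra (m n : ℕ) (hm : 2 ≤ m) (hn : 1 ≤ n)
    (A : Fin n → Matrix (Fin m) (Fin m) ℝ)
    (hsym : ∀ α, (A α).IsSymm) (htr : ∀ α, (A α).trace = 0)
    (v : Fin n → Fin m → ℝ) :
    ((m : ℝ) / ((m : ℝ) - 1)) * ∑ i, (∑ α, (A α).mulVec (v α) i) ^ 2 ≤
      (∑ α, ∑ i, (v α i) ^ 2) * (∑ α, ∑ i, ∑ j, (A α i j) ^ 2) :=
  refined_kato_algebra_general m n hm A hsym htr v
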